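/- arXiv:2408.00262 — 5 statements merged into one kernel-verified Lean document; each statement's English description precedes it below -/
import Mathlib

section
/- Soundness of CK: if Γ ⊢_CK φ, then Γ semantically entails φ on the class of all CK-frames, i.e. for every CK-model M and every world x of M, if M, x ⊩ ψ for all ψ ∈ Γ then M, x ⊩ φ. -/
/-- Formulas of the modal language L. -/
inductive Form : Type
  | var : ℕ → Form
  | bot : Form
  | and : Form → Form → Form
  | or : Form → Form → Form
  | imp : Form → Form → Form
  | box : Form → Form
  | dia : Form → Form

namespace Form

/-- Negation abbreviation: ¬φ := φ → ⊥. -/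
def neg (φ : Form) : Form := φ.imp bot

/-- Uniform substitution. -/
def subst (σ : ℕ → Form) : Form → Form
  | var p => σ p
  | bot => bot
  | and a b => and (a.subst σ) (b.subst σ)
  | or a b => or (a.subst σ) (b.subst σ)
  | imp a b => imp (a.subst σ) (b.subst σ)
  | box a => box (a.subst σ)
  | dia a => dia (a.subst σ)

end Form

/-- Substitution instances of the axioms of a standard Hilbert axiomatisation
of intuitionistic propositional logic (the axioms are schematic, so all
substitution instances are included). -/
inductive IPLAx : Form → Prop
  | a1 (φ ψ : Form) : IPLAx (φ.imp (ψ.imp φ))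
  | a2 (φ ψ χ : Form) : IPLAx ((φ.imp (ψ.imp χ)).imp ((φ.imp ψ).imp (φ.imp χ)))
  | a3 (φ ψ : Form) : IPLAx ((φ.and ψ).imp φ)
  | a4 (φ ψ : Form) : IPLAx ((φ.and ψ).imp ψ)
  | a5 (φ ψ : Form) : IPLAx (φ.imp (ψ.imp (φ.and ψ)))
  | a6 (φ ψ : Form) : IPLAx (φ.imp (φ.or ψ))
  | a7 (φ ψ : Form) : IPLAx (ψ.imp (φ.or ψ))
  | a8 (φ ψ χ : Form) : IPLAx ((φ.imp χ).imp ((ψ.imp χ).imp ((φ.or ψ).imp χ)))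
  | a9 (φ : Form) : IPLAx (Form.bot.imp φ)

/-- Substitution instances of K_□ : □(φ→ψ) → (□φ → □ψ). -/
def KBoxAx (χ : Form) : Prop :=
  ∃ φ ψ : Form, χ = ((φ.imp ψ).box).imp ((φ.box).imp (ψ.box))

/-- Substitution instances of K_◇ : □(φ→ψ) → (◇φ → ◇ψ). -/
def KDiaAx (χ : Form) : Prop :=
  ∃ φ ψ : Form, χ = ((φ.imp ψ).box).imp ((φ.dia).imp (ψ.dia))

/-- Axiom instances available in the calculus CK ⊕ Ax : instances of IPL
axioms, of K_□, of K_◇, or substitution instances of members of Ax. -/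
def AxInst (Ax : Set Form) (φ : Form) : Prop :=
  IPLAx φ ∨ KBoxAx φ ∨ KDiaAx φ ∨ ∃ ψ ∈ Ax, ∃ σ : ℕ → Form, φ = ψ.subst σ

/-- The generalised Hilbert calculus CK ⊕ Ax deriving consecutions Γ ⊢_Ax φ:
rules (Ax), (MP), (Nec) and (El). -/
inductive Prv (Ax : Set Form) : Set Form → Form → Prop
  | ax {Γ : Set Form} {φ : Form} : AxInst Ax φ → Prv Ax Γ φ
  | mp {Γ : Set Form} {φ ψ : Form} : Prv Ax Γ φ → Prv Ax Γ (φ.imp ψ) → Prv Ax Γ ψ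
  | nec {Γ : Set Form} {φ : Form} : Prv Ax ∅ φ → Prv Ax Γ φ.box
  | el {Γ : Set Form} {φ : Form} : φ ∈ Γ → Prv Ax Γ φ

/-- A CK-frame (X, e, ≤, R): ≤ is a preorder, e is ≤-maximal (an "exploding"
world), and e R x iff x = e. -/
structure CKFrame where
  W : Type
  le : W → W → Prop
  R : W → W → Prop
  e : W
  le_refl : ∀ x : W, le x x
  le_trans : ∀ {x y z : W}, le x y → le y z → le x z
  e_max : ∀ {x : W}, le e x → x = e
  e_R : ∀ x : W, R e x ↔ x = e

/-- A valuation on a CK-frame: each variable gets a ≤-upset containing e. -/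
structure Val (F : CKFrame) where
  V : ℕ → F.W → Prop
  mono : ∀ (p : ℕ) {x y : F.W}, F.le x y → V p x → V p y
  at_e : ∀ p : ℕ, V p F.e

/-- The forcing relation M, x ⊩ φ of a CK-model (F, V). -/
def Forces (F : CKFrame) (V : Val F) : Form → F.W → Prop
  | .var p, x => V.V p x
  | .bot, x => x = F.e
  | .and a b, x => Forces F V a x ∧ Forces F V b x
  | .or a b, x => Forces F V a x ∨ Forces F V b x
  | .imp a b, x => ∀ y : F.W, F.le x y → Forces F V a y → Forces F V b y
  | .box a, x => ∀ y z : F.W, F.le x y → F.R y z → Forces F V a z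
  | .dia a, x => ∀ y : F.W, F.le x y → ∃ z : F.W, F.R y z ∧ Forces F V a z

/-- A frame validates the consecution Γ ⊢ φ if in every model on it, every
world forcing all of Γ forces φ. -/
def ValidConseq (F : CKFrame) (Γ : Set Form) (φ : Form) : Prop :=
  ∀ (V : Val F) (x : F.W), (∀ ψ ∈ Γ, Forces F V ψ x) → Forces F V φ x

/-- A frame validates a formula φ if every world in every model on it forces φ. -/
def ValidForm (F : CKFrame) (φ : Form) : Prop :=
  ∀ (V : Val F) (x : F.W), Forces F V φ x

/-- Γ semantically entails φ on a class 𝓕 of CK-frames. -/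
def SemEntails (𝓕 : Set CKFrame) (Γ : Set Form) (φ : Form) : Prop :=
  ∀ F ∈ 𝓕, ValidConseq F Γ φ

lemma forces_mono (F : CKFrame) (V : Val F) :
    ∀ (φ : Form) {x y : F.W}, F.le x y → Forces F V φ x → Forces F V φ y := by
  intro φ
  induction φ with
  | var p => intro x y h hx; exact V.mono p h hx
  | bot => intro x y h hx; subst hx; exact F.e_max h
  | and a b iha ihb => intro x y h hx; exact ⟨iha h hx.1, ihb h hx.2⟩
  | or a b iha ihb =>
      intro x y h hx
      cases hx with
      | inl ha => exact Or.inl (iha h ha)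
      | inr hb => exact Or.inr (ihb h hb)
  | imp a b iha ihb => intro x y h hx z hz ha; exact hx z (F.le_trans h hz) ha
  | box a ih => intro x y h hx z w hz hw; exact hx z w (F.le_trans h hz) hw
  | dia a ih => intro x y h hx z hz; exact hx z (F.le_trans h hz)

lemma forces_at_e (F : CKFrame) (V : Val F) :
    ∀ φ : Form, Forces F V φ F.e := by
  intro φ
  induction φ with
  | var p => exact V.at_e p
  | bot => rfl
  | and a b iha ihb => exact ⟨iha, ihb⟩
  | or a b iha ihb => exact Or.inl iha
  | imp a b iha ihb =>
      intro y hy _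
      have := F.e_max hy; subst this; exact ihb
  | box a ih =>
      intro y z hy hz
      have := F.e_max hy; subst this
      have := (F.e_R z).mp hz; subst this; exact ih
  | dia a ih =>
      intro y hy
      have := F.e_max hy; subst this
      exact ⟨F.e, (F.e_R F.e).mpr rfl, ih⟩

lemma ax_valid (F : CKFrame) (V : Val F) {φ : Form} (h : AxInst ∅ φ) :
    ∀ x : F.W, Forces F V φ x := by
  intro x
  rcases h with h | h | h | ⟨ψ, hψ, _⟩
  · induction h with
    | a1 φ ψ => intro y _ ha z hz _; exact forces_mono F V φ hz ha
    | a2 φ ψ χ =>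
        intro y _ h1 z hz h2 w hw ha
        exact h1 w (F.le_trans hz hw) ha w (F.le_refl w)
          (h2 w hw ha)
    | a3 φ ψ => intro y _ h; exact h.1
    | a4 φ ψ => intro y _ h; exact h.2
    | a5 φ ψ => intro y _ ha z hz hb; exact ⟨forces_mono F V φ hz ha, hb⟩
    | a6 φ ψ => intro y _ h; exact Or.inl h
    | a7 φ ψ => intro y _ h; exact Or.inr h
    | a8 φ ψ χ =>
        intro y _ h1 z hz h2 w hw hor
        cases hor with
        | inl ha => exact h1 w (F.le_trans hz hw) ha
        | inr hb => exact h2 w hw hb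
    | a9 φ => intro y _ hb; subst hb; exact forces_at_e F V φ
  · rcases h with ⟨φ, ψ, rfl⟩
    intro y _ hbox z hz hboxφ w u hw hu
    exact hbox w u (F.le_trans hz hw) hu u (F.le_refl u)
      (hboxφ w u hw hu)
  · rcases h with ⟨φ, ψ, rfl⟩
    intro y _ hbox z hz hdia w hw
    obtain ⟨u, hu, hφ⟩ := hdia w hw
    exact ⟨u, hu, hbox w u (F.le_trans hz hw) hu u (F.le_refl u) hφ⟩
  · exact absurd hψ (Set.notMem_empty ψ)

/-- Soundness of CK: if Γ ⊢_CK φ then Γ semantically entails φ on the class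
of all CK-frames. -/
theorem ck_soundness (Γ : Set Form) (φ : Form) (h : Prv ∅ Γ φ) :
    ∀ F : CKFrame, ValidConseq F Γ φ := by
  intro F
  induction h with
  | ax hax => intro V x _; exact ax_valid F V hax x
  | mp h1 h2 ih1 ih2 =>
      intro V x hΓ
      exact ih2 V x hΓ x (F.le_refl x) (ih1 V x hΓ)
  | nec h ih =>
      intro V x _ y z _ _
      exact ih V z (fun ψ hψ => absurd hψ (Set.notMem_empty ψ))
  | el hmem => intro V x hΓ; exact hΓ _ hmem
end

section
/- Let Ax be a set of L-formulas and let Γ be a prime theory (w.r.t. Ax) such that ◇φ ∉ Γ. Then there exists a set U of prime theories such that (Γ, U) is a segment and φ ∉ Δ for all Δ ∈ U. -/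
/-- A theory: a deductively closed set of formulas. -/
def Theory (Ax : Set Form) (Γ : Set Form) : Prop := ∀ φ : Form, Prv Ax Γ φ → φ ∈ Γ

/-- A set of formulas is prime if φ∨ψ ∈ Γ implies φ ∈ Γ or ψ ∈ Γ. -/
def PrimeSet (Γ : Set Form) : Prop := ∀ φ ψ : Form, φ.or ψ ∈ Γ → φ ∈ Γ ∨ ψ ∈ Γ

/-- A prime theory (possibly inconsistent). -/
def PrimeTheory (Ax : Set Form) (Γ : Set Form) : Prop := Theory Ax Γ ∧ PrimeSet Γ

/-- (Γ, U) is a segment: Γ is a prime theory, U a set of prime theories,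
□φ ∈ Γ implies φ ∈ Δ for all Δ ∈ U, and ◇φ ∈ Γ implies φ ∈ Δ for some Δ ∈ U. -/
def IsSegment (Ax : Set Form) (Γ : Set Form) (U : Set (Set Form)) : Prop :=
  PrimeTheory Ax Γ ∧ (∀ Δ ∈ U, PrimeTheory Ax Δ) ∧
  (∀ φ : Form, φ.box ∈ Γ → ∀ Δ ∈ U, φ ∈ Δ) ∧
  (∀ φ : Form, φ.dia ∈ Γ → ∃ Δ ∈ U, φ ∈ Δ)

/-! Take `U` to be the set of all prime theories that contain `□⁻¹Γ = {χ | □χ ∈ Γ}` and omit `φ`.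
If `◇ψ ∈ Γ`, then `□⁻¹Γ, ψ ⊬ φ`: otherwise `□⁻¹Γ ⊢ ψ → φ`, so `□(ψ → φ) ∈ Γ`, and `K_◇` gives
`◇φ ∈ Γ`. The Lindenbaum lemma extends `□⁻¹Γ ∪ {ψ}` to a prime theory omitting `φ`, which is the
witness for `◇ψ` required of a segment. -/

namespace Prv

variable {Ax Γ Δ : Set Form} {φ ψ χ : Form}

theorem ipl (h : IPLAx φ) : Prv Ax Γ φ := ax (Or.inl h)

theorem mono (h : Prv Ax Γ φ) (hΓΔ : Γ ⊆ Δ) : Prv Ax Δ φ := by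
  induction h with
  | ax h => exact ax h
  | mp _ _ ih₁ ih₂ => exact mp (ih₁ hΓΔ) (ih₂ hΓΔ)
  | nec h => exact nec h
  | el h => exact el (hΓΔ h)

theorem imp_intro (h : Prv Ax Γ φ) : Prv Ax Γ (ψ.imp φ) := mp h (ipl (IPLAx.a1 φ ψ))

theorem imp_self : Prv Ax Γ (φ.imp φ) :=
  mp (ipl (IPLAx.a1 φ φ)) (mp (ipl (IPLAx.a1 φ (φ.imp φ))) (ipl (IPLAx.a2 φ (φ.imp φ) φ)))

theorem imp_of_subset_insert (h : Prv Ax Δ ψ) (hΔ : Δ ⊆ insert χ Γ) : Prv Ax Γ (χ.imp ψ) := by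
  induction h with
  | ax h => exact imp_intro (ax h)
  | mp _ _ ih₁ ih₂ => exact mp (ih₁ hΔ) (mp (ih₂ hΔ) (ipl (IPLAx.a2 _ _ _)))
  | nec h => exact imp_intro (nec h)
  | el h =>
    rcases hΔ h with rfl | h
    · exact imp_self
    · exact imp_intro (el h)

theorem deduction (h : Prv Ax (insert χ Γ) ψ) : Prv Ax Γ (χ.imp ψ) :=
  imp_of_subset_insert h subset_rfl

theorem cut (h₁ : Prv Ax Γ χ) (h₂ : Prv Ax (insert χ Γ) ψ) : Prv Ax Γ ψ := mp h₁ (deduction h₂)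

theorem exists_finite_subset (h : Prv Ax Γ φ) : ∃ Γ₀ ⊆ Γ, Γ₀.Finite ∧ Prv Ax Γ₀ φ := by
  induction h with
  | ax h => exact ⟨∅, Set.empty_subset _, Set.finite_empty, ax h⟩
  | mp _ _ ih₁ ih₂ =>
    obtain ⟨A, hA, hAfin, hφ⟩ := ih₁
    obtain ⟨B, hB, hBfin, hφψ⟩ := ih₂
    exact ⟨A ∪ B, Set.union_subset hA hB, hAfin.union hBfin,
      mp (hφ.mono Set.subset_union_left) (hφψ.mono Set.subset_union_right)⟩
  | nec h => exact ⟨∅, Set.empty_subset _, Set.finite_empty, nec h⟩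
  | el h => exact ⟨{_}, Set.singleton_subset_iff.2 h, Set.finite_singleton _, el rfl⟩

theorem box_of_forall_box (h : Prv Ax Δ φ) (hΔ : ∀ χ ∈ Δ, Prv Ax Γ χ.box) : Prv Ax Γ φ.box := by
  induction h with
  | ax h => exact nec (ax h)
  | @mp _ ψ φ _ _ ih₁ ih₂ => exact mp (ih₁ hΔ) (mp (ih₂ hΔ) (ax (Or.inr (Or.inl ⟨ψ, φ, rfl⟩))))
  | nec h => exact nec (nec h)
  | el h => exact hΔ _ h

end Prv

section Lindenbaum

variable {Ax Γ Δ : Set Form} {φ ψ : Form}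

theorem isOfFiniteCharacter_not_prv (Ax : Set Form) (φ : Form) :
    Order.IsOfFiniteCharacter {Δ | ¬ Prv Ax Δ φ} := fun Δ =>
  ⟨fun hΔ Δ₀ hΔ₀ _ hφ => hΔ (hφ.mono hΔ₀), fun hfin hφ => by
    obtain ⟨Δ₀, hΔ₀, hΔ₀fin, hφ₀⟩ := hφ.exists_finite_subset
    exact hfin Δ₀ hΔ₀ hΔ₀fin hφ₀⟩

theorem prv_insert_of_maximal_not_prv (hΔ : Maximal (fun Δ => ¬ Prv Ax Δ φ) Δ) (hψ : ψ ∉ Δ) :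
    Prv Ax (insert ψ Δ) φ := by
  by_contra hφ
  exact hψ (hΔ.eq_of_subset hφ (Set.subset_insert ψ Δ) ▸ Set.mem_insert ψ Δ)

theorem theory_of_maximal_not_prv (hΔ : Maximal (fun Δ => ¬ Prv Ax Δ φ) Δ) : Theory Ax Δ :=
  fun _ hψ => by_contra fun hψΔ => hΔ.prop (hψ.cut (prv_insert_of_maximal_not_prv hΔ hψΔ))

theorem primeSet_of_maximal_not_prv (hΔ : Maximal (fun Δ => ¬ Prv Ax Δ φ) Δ) : PrimeSet Δ := by
  intro ψ χ hψχ
  by_contra! ⟨hψ, hχ⟩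
  have hψφ := Prv.deduction (prv_insert_of_maximal_not_prv hΔ hψ)
  have hχφ := Prv.deduction (prv_insert_of_maximal_not_prv hΔ hχ)
  exact hΔ.prop (Prv.mp (Prv.el hψχ) (Prv.mp hχφ (Prv.mp hψφ (Prv.ipl (IPLAx.a8 ψ χ φ)))))

theorem exists_primeTheory_superset_not_mem (h : ¬ Prv Ax Γ φ) :
    ∃ Δ, Γ ⊆ Δ ∧ PrimeTheory Ax Δ ∧ φ ∉ Δ := by
  obtain ⟨Δ, hΓΔ, hΔ⟩ := (isOfFiniteCharacter_not_prv Ax φ).exists_maximal h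
  exact ⟨Δ, hΓΔ, ⟨theory_of_maximal_not_prv hΔ, primeSet_of_maximal_not_prv hΔ⟩,
    fun hφ => hΔ.prop (Prv.el hφ)⟩

end Lindenbaum

theorem not_prv_insert_preimage_box {Ax Γ : Set Form} {φ ψ : Form} (hΓ : Theory Ax Γ)
    (hψ : ψ.dia ∈ Γ) (hφ : φ.dia ∉ Γ) : ¬ Prv Ax (insert ψ (Form.box ⁻¹' Γ)) φ := by
  intro hψφ
  have hbox : Prv Ax Γ (ψ.imp φ).box :=
    (Prv.deduction hψφ).box_of_forall_box fun χ hχ => Prv.el hχ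
  have hKdia : Prv Ax Γ ((ψ.imp φ).box.imp (ψ.dia.imp φ.dia)) :=
    Prv.ax (Or.inr (Or.inr (Or.inl ⟨ψ, φ, rfl⟩)))
  exact hφ (hΓ _ (Prv.mp (Prv.el hψ) (Prv.mp hbox hKdia)))

/-- If Γ is a prime theory with ◇φ ∉ Γ, then there is a set U of prime
theories such that (Γ, U) is a segment and φ ∉ Δ for all Δ ∈ U. -/
theorem segment_avoiding_dia (Ax : Set Form) (Γ : Set Form)
    (hΓ : PrimeTheory Ax Γ) (φ : Form) (h : φ.dia ∉ Γ) :
    ∃ U : Set (Set Form), IsSegment Ax Γ U ∧ ∀ Δ ∈ U, φ ∉ Δ := by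
  refine ⟨{Δ | PrimeTheory Ax Δ ∧ Form.box ⁻¹' Γ ⊆ Δ ∧ φ ∉ Δ},
    ⟨hΓ, fun Δ hΔ => hΔ.1, fun χ hχ Δ hΔ => hΔ.2.1 hχ, ?_⟩, fun Δ hΔ => hΔ.2.2⟩
  intro ψ hψ
  obtain ⟨Δ, hΓΔ, hΔ, hφ⟩ :=
    exists_primeTheory_superset_not_mem (not_prv_insert_preimage_box hΓ.1 hψ h)
  exact ⟨Δ, ⟨hΔ, (Set.subset_insert ψ _).trans hΓΔ, hφ⟩, hΓΔ (Set.mem_insert ψ _)⟩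
end

section
/- General strong completeness: let Ax be a set of L-formulas and let F be a class of CK-frames such that the canonical frame X_{CK⊕Ax} (the frame of all segments) belongs to F and every frame in F validates all formulas in Ax. Then for every set Γ of formulas and every formula φ, if Γ semantically entails φ on F (every frame in F validates the consecution Γ ⊢ φ), then Γ ⊢_Ax φ. -/
/-- Segments, the worlds of the canonical model of CK ⊕ Ax. -/
structure Segment (Ax : Set Form) where
  hd : Set Form
  tl : Set (Set Form)
  seg : IsSegment Ax hd tl

theorem Segment.ext' {Ax : Set Form} :
    ∀ {s t : Segment Ax}, s.hd = t.hd → s.tl = t.tl → s = t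
  | ⟨_, _, _⟩, ⟨_, _, _⟩, rfl, rfl => rfl

theorem theory_bot_eq_univ {Ax : Set Form} {Δ : Set Form} (hΔ : Theory Ax Δ)
    (hbot : Form.bot ∈ Δ) : Δ = Set.univ := by
  ext φ
  simp only [Set.mem_univ, iff_true]
  exact hΔ φ (Prv.mp (Prv.el hbot) (Prv.ax (Or.inl (IPLAx.a9 φ))))

theorem univ_primeTheory (Ax : Set Form) : PrimeTheory Ax Set.univ :=
  ⟨fun _ _ => Set.mem_univ _, fun φ _ _ => Or.inl (Set.mem_univ φ)⟩

/-- The exploding segment (L, {L}). -/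
def explSeg (Ax : Set Form) : Segment Ax where
  hd := Set.univ
  tl := {Set.univ}
  seg := by
    refine ⟨univ_primeTheory Ax, ?_, ?_, ?_⟩
    · intro Δ hΔ
      rw [Set.mem_singleton_iff] at hΔ
      subst hΔ
      exact univ_primeTheory Ax
    · intro φ _ Δ hΔ
      rw [Set.mem_singleton_iff] at hΔ
      subst hΔ
      exact Set.mem_univ φ
    · intro φ _
      exact ⟨Set.univ, rfl, Set.mem_univ φ⟩

theorem seg_univ_tl {Ax : Set Form} (s : Segment Ax) (h : s.hd = Set.univ) :
    s.tl = {Set.univ} := by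
  obtain ⟨_, htl, hbox, hdia⟩ := s.seg
  ext Δ
  simp only [Set.mem_singleton_iff]
  constructor
  · intro hΔ
    have hb : Form.bot.box ∈ s.hd := by rw [h]; exact Set.mem_univ _
    exact theory_bot_eq_univ (htl Δ hΔ).1 (hbox Form.bot hb Δ hΔ)
  · intro hΔ
    subst hΔ
    have hd : Form.bot.dia ∈ s.hd := by rw [h]; exact Set.mem_univ _
    obtain ⟨Δ', hΔ', hbot⟩ := hdia Form.bot hd
    have := theory_bot_eq_univ (htl Δ' hΔ').1 hbot
    rwa [this] at hΔ'

/-- The canonical frame of CK ⊕ Ax: all segments, ordered by inclusion of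
heads, with (Γ,U) R (Γ',U') iff Γ' ∈ U, and exploding world (L, {L}). -/
def canonFrame (Ax : Set Form) : CKFrame where
  W := Segment Ax
  le s t := s.hd ⊆ t.hd
  R s t := t.hd ∈ s.tl
  e := explSeg Ax
  le_refl _ := subset_rfl
  le_trans h1 h2 := h1.trans h2
  e_max := by
    intro s h
    have hhd : s.hd = Set.univ := Set.univ_subset_iff.mp h
    exact Segment.ext' hhd (seg_univ_tl s hhd)
  e_R := by
    intro s
    constructor
    · intro h
      have hhd : s.hd = Set.univ := h
      exact Segment.ext' hhd (seg_univ_tl s hhd)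
    · intro h
      subst h
      rfl

/-- The canonical valuation V(p) = { (Γ,U) : p ∈ Γ }. -/
def canonVal (Ax : Set Form) : Val (canonFrame Ax) where
  V p s := Form.var p ∈ s.hd
  mono := by intro p x y h hp; exact h hp
  at_e := by intro p; exact Set.mem_univ _

section CompletenessProof

variable {Ax : Set Form}

theorem prv_mono {Γ : Set Form} {φ : Form} (h : Prv Ax Γ φ) :
    ∀ {Γ' : Set Form}, Γ ⊆ Γ' → Prv Ax Γ' φ := by
  induction h with
  | ax h => intro Γ' _; exact .ax h
  | mp _ _ ih1 ih2 => intro Γ' hs; exact .mp (ih1 hs) (ih2 hs)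
  | nec h => intro Γ' _; exact .nec h
  | el h => intro Γ' hs; exact .el (hs h)

theorem prv_imp_self (Γ : Set Form) (χ : Form) : Prv Ax Γ (χ.imp χ) :=
  .mp (.ax (Or.inl (IPLAx.a1 χ χ)))
    (.mp (.ax (Or.inl (IPLAx.a1 χ (χ.imp χ)))) (.ax (Or.inl (IPLAx.a2 χ (χ.imp χ) χ))))

theorem prv_weak_imp {Γ : Set Form} {χ ψ : Form} (h : Prv Ax Γ ψ) :
    Prv Ax Γ (χ.imp ψ) :=
  .mp h (.ax (Or.inl (IPLAx.a1 ψ χ)))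

theorem deduction_aux {S : Set Form} {ψ : Form} (h : Prv Ax S ψ) :
    ∀ {Γ : Set Form} {χ : Form}, S ⊆ insert χ Γ → Prv Ax Γ (χ.imp ψ) := by
  induction h with
  | ax h => intro Γ χ _; exact prv_weak_imp (.ax h)
  | mp _ _ ih1 ih2 =>
      intro Γ χ hs
      exact .mp (ih1 hs) (.mp (ih2 hs) (.ax (Or.inl (IPLAx.a2 χ _ _))))
  | nec h => intro Γ χ _; exact prv_weak_imp (.nec h)
  | el h =>
      intro Γ χ hs
      rcases Set.mem_insert_iff.mp (hs h) with h' | h'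
      · subst h'; exact prv_imp_self Γ _
      · exact prv_weak_imp (.el h')

theorem deduction {Γ : Set Form} {χ φ : Form} (h : Prv Ax (insert χ Γ) φ) :
    Prv Ax Γ (χ.imp φ) :=
  deduction_aux h subset_rfl

theorem prv_finset {Γ : Set Form} {φ : Form} (h : Prv Ax Γ φ) :
    ∃ Γ₀ : Finset Form, ↑Γ₀ ⊆ Γ ∧ Prv Ax ↑Γ₀ φ := by
  classical
  induction h with
  | ax h => exact ⟨∅, by simp, .ax h⟩
  | mp _ _ ih1 ih2 =>
      obtain ⟨A, hA, pA⟩ := ih1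
      obtain ⟨B, hB, pB⟩ := ih2
      refine ⟨A ∪ B, ?_, .mp (prv_mono pA ?_) (prv_mono pB ?_)⟩
      · rw [Finset.coe_union]; exact Set.union_subset hA hB
      · rw [Finset.coe_union]; exact Set.subset_union_left
      · rw [Finset.coe_union]; exact Set.subset_union_right
  | nec h => exact ⟨∅, by simp, .nec h⟩
  | el h => exact ⟨{_}, by simpa using h, .el (by simp)⟩

theorem finset_subset_chain {c : Set (Set Form)} (hne : c.Nonempty)
    (hc : IsChain (· ⊆ ·) c) (Γ₀ : Finset Form) :
    ↑Γ₀ ⊆ ⋃₀ c → ∃ t ∈ c, ↑Γ₀ ⊆ t := by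
  classical
  induction Γ₀ using Finset.induction_on with
  | empty => intro _; obtain ⟨t, ht⟩ := hne; exact ⟨t, ht, by simp⟩
  | @insert a s ha ih =>
      intro hsub
      rw [Finset.coe_insert] at hsub
      obtain ⟨t1, ht1, hst1⟩ := ih ((Set.subset_insert _ _).trans hsub)
      obtain ⟨t2, ht2, hat2⟩ := hsub (Set.mem_insert _ _)
      rw [Finset.coe_insert]
      rcases eq_or_ne t1 t2 with rfl | hne'
      · exact ⟨t1, ht1, Set.insert_subset hat2 hst1⟩
      rcases hc ht1 ht2 hne' with h | h
      · exact ⟨t2, ht2, Set.insert_subset hat2 (hst1.trans h)⟩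
      · exact ⟨t1, ht1, Set.insert_subset (h hat2) hst1⟩

theorem lindenbaum {Γ : Set Form} {ψ : Form} (h : ¬ Prv Ax Γ ψ) :
    ∃ Δ : Set Form, Γ ⊆ Δ ∧ PrimeTheory Ax Δ ∧ ψ ∉ Δ := by
  have hzorn : ∀ c ⊆ {Δ : Set Form | ¬ Prv Ax Δ ψ}, IsChain (· ⊆ ·) c → c.Nonempty →
      ∃ ub ∈ {Δ : Set Form | ¬ Prv Ax Δ ψ}, ∀ s ∈ c, s ⊆ ub := by
    intro c hcS hchain hcne
    refine ⟨⋃₀ c, ?_, fun s hs => Set.subset_sUnion_of_mem hs⟩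
    intro hp
    obtain ⟨Γ₀, hΓ₀, p₀⟩ := prv_finset hp
    obtain ⟨t, htc, ht⟩ := finset_subset_chain hcne hchain Γ₀ hΓ₀
    exact hcS htc (prv_mono p₀ ht)
  obtain ⟨Δ, hΓΔ, hmax⟩ := zorn_subset_nonempty {Δ : Set Form | ¬ Prv Ax Δ ψ} hzorn Γ h
  have hΔS : ¬ Prv Ax Δ ψ := hmax.prop
  have hins : ∀ φ : Form, ¬ Prv Ax (insert φ Δ) ψ → φ ∈ Δ := by
    intro φ hφ
    exact hmax.2 hφ (Set.subset_insert _ _) (Set.mem_insert _ _)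
  have hthy : Theory Ax Δ := by
    intro φ hp
    refine hins φ (fun hd => hΔS ?_)
    exact .mp hp (deduction hd)
  refine ⟨Δ, hΓΔ, ⟨hthy, ?_⟩, fun hψ => hΔS (.el hψ)⟩
  intro φ χ hor
  by_contra hcon
  push_neg at hcon
  obtain ⟨hφ, hχ⟩ := hcon
  have h1 : Prv Ax (insert φ Δ) ψ := by
    by_contra h'; exact hφ (hins φ h')
  have h2 : Prv Ax (insert χ Δ) ψ := by
    by_contra h'; exact hχ (hins χ h')
  have d1 := deduction h1
  have d2 := deduction h2
  exact hΔS (.mp (.el hor) (.mp d2 (.mp d1 (.ax (Or.inl (IPLAx.a8 φ χ ψ))))))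

theorem theory_mp {Δ : Set Form} (hΔ : Theory Ax Δ) {φ ψ : Form}
    (h1 : φ.imp ψ ∈ Δ) (h2 : φ ∈ Δ) : ψ ∈ Δ :=
  hΔ ψ (.mp (.el h2) (.el h1))

theorem boxInv {Δ : Set Form} (hΔ : Theory Ax Δ) {S : Set Form} {ψ : Form}
    (h : Prv Ax S ψ) : (∀ χ ∈ S, χ.box ∈ Δ) → ψ.box ∈ Δ := by
  induction h with
  | ax h => intro _; exact hΔ _ (.nec (.ax h))
  | mp _ _ ih1 ih2 =>
      intro hS
      exact theory_mp hΔ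
        (theory_mp hΔ (hΔ _ (.ax (Or.inr (Or.inl ⟨_, _, rfl⟩)))) (ih2 hS)) (ih1 hS)
  | nec h => intro _; exact hΔ _ (.nec (.nec h))
  | el h => intro hS; exact hS _ h

theorem dia_prv {Δ : Set Form} (hΔ : Theory Ax Δ) {χ ψ : Form}
    (hdia : χ.dia ∈ Δ) (h : Prv Ax (insert χ {φ | φ.box ∈ Δ}) ψ) : ψ.dia ∈ Δ := by
  have h2 : (χ.imp ψ).box ∈ Δ := boxInv hΔ (deduction h) (fun _ hx => hx)
  exact theory_mp hΔ
    (theory_mp hΔ (hΔ _ (.ax (Or.inr (Or.inr (Or.inl ⟨_, _, rfl⟩))))) h2) hdia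

/-- The canonical set of successors of a prime theory. -/
def canonTl (Ax : Set Form) (Δ : Set Form) : Set (Set Form) :=
  {Δ' | PrimeTheory Ax Δ' ∧ ∀ χ : Form, χ.box ∈ Δ → χ ∈ Δ'}

theorem canonTl_seg {Δ : Set Form} (hΔ : PrimeTheory Ax Δ) :
    IsSegment Ax Δ (canonTl Ax Δ) :=
  ⟨hΔ, fun _ h => h.1, fun φ hφ _ hΔ' => hΔ'.2 φ hφ,
   fun φ _ => ⟨Set.univ, ⟨univ_primeTheory Ax, fun _ _ => Set.mem_univ _⟩, Set.mem_univ φ⟩⟩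

/-- The canonical segment of a prime theory. -/
def mkSeg (Δ : Set Form) (hΔ : PrimeTheory Ax Δ) : Segment Ax :=
  ⟨Δ, canonTl Ax Δ, canonTl_seg hΔ⟩

theorem truth_lemma (Ax : Set Form) :
    ∀ (φ : Form) (s : Segment Ax),
      Forces (canonFrame Ax) (canonVal Ax) φ s ↔ φ ∈ s.hd := by
  intro φ
  induction φ with
  | var p => intro s; exact Iff.rfl
  | bot =>
      intro s
      constructor
      · intro h
        have : s = explSeg Ax := h
        rw [this]
        exact Set.mem_univ _
      · intro h
        have h1 : s.hd = Set.univ := theory_bot_eq_univ s.seg.1.1 h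
        exact Segment.ext' h1 (seg_univ_tl s h1)
  | and a b iha ihb =>
      intro s
      constructor
      · rintro ⟨h1, h2⟩
        exact s.seg.1.1 _
          (.mp (.el ((ihb s).1 h2)) (.mp (.el ((iha s).1 h1)) (.ax (Or.inl (IPLAx.a5 a b)))))
      · intro h
        exact ⟨(iha s).2 (theory_mp s.seg.1.1 (s.seg.1.1 _ (.ax (Or.inl (IPLAx.a3 a b)))) h),
               (ihb s).2 (theory_mp s.seg.1.1 (s.seg.1.1 _ (.ax (Or.inl (IPLAx.a4 a b)))) h)⟩
  | or a b iha ihb =>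
      intro s
      constructor
      · rintro (h | h)
        · exact theory_mp s.seg.1.1 (s.seg.1.1 _ (.ax (Or.inl (IPLAx.a6 a b)))) ((iha s).1 h)
        · exact theory_mp s.seg.1.1 (s.seg.1.1 _ (.ax (Or.inl (IPLAx.a7 a b)))) ((ihb s).1 h)
      · intro h
        rcases s.seg.1.2 a b h with h' | h'
        · exact Or.inl ((iha s).2 h')
        · exact Or.inr ((ihb s).2 h')
  | imp a b iha ihb =>
      intro s
      constructor
      · intro h
        by_contra hni
        have hnp : ¬ Prv Ax (insert a s.hd) b := fun hp => hni (s.seg.1.1 _ (deduction hp))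
        obtain ⟨Δ, hsub, hpt, hb⟩ := lindenbaum hnp
        have hle : s.hd ⊆ (mkSeg Δ hpt).hd := (Set.subset_insert _ _).trans hsub
        have hat : Forces (canonFrame Ax) (canonVal Ax) a (mkSeg Δ hpt) :=
          (iha _).2 (hsub (Set.mem_insert _ _))
        exact hb ((ihb _).1 (h (mkSeg Δ hpt) hle hat))
      · intro h t hle hat
        exact (ihb t).2 (theory_mp t.seg.1.1 (hle h) ((iha t).1 hat))
  | box a iha =>
      intro s
      constructor
      · intro h
        by_contra hnb
        have hnp : ¬ Prv Ax {χ : Form | χ.box ∈ s.hd} a :=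
          fun hp => hnb (boxInv s.seg.1.1 hp (fun _ hx => hx))
        obtain ⟨Δ, hsub, hpt, ha⟩ := lindenbaum hnp
        have hforce := h (⟨s.hd, canonTl Ax s.hd, canonTl_seg s.seg.1⟩ : Segment Ax)
          (mkSeg Δ hpt) subset_rfl
          (show Δ ∈ canonTl Ax s.hd from ⟨hpt, fun χ hχ => hsub hχ⟩)
        exact ha ((iha _).1 hforce)
      · intro h t z hle hR
        exact (iha z).2 (t.seg.2.2.1 a (hle h) z.hd hR)
  | dia a iha =>
      intro s
      constructor
      · intro h
        by_contra hnd
        have hseg : IsSegment Ax s.hd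
            {Δ' | PrimeTheory Ax Δ' ∧ (∀ χ : Form, χ.box ∈ s.hd → χ ∈ Δ') ∧ a ∉ Δ'} := by
          refine ⟨s.seg.1, fun _ h' => h'.1, fun φ hφ _ hΔ' => hΔ'.2.1 φ hφ, ?_⟩
          intro χ hχ
          have hnp : ¬ Prv Ax (insert χ {φ : Form | φ.box ∈ s.hd}) a :=
            fun hp => hnd (dia_prv s.seg.1.1 hχ hp)
          obtain ⟨Δ, hsub, hpt, ha⟩ := lindenbaum hnp
          exact ⟨Δ, ⟨hpt, fun χ' h' => hsub (Set.mem_insert_of_mem _ h'), ha⟩,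
                 hsub (Set.mem_insert _ _)⟩
        obtain ⟨z, hR, hz⟩ := h (⟨s.hd, _, hseg⟩ : Segment Ax) subset_rfl
        exact hR.2.2 ((iha z).1 hz)
      · intro h t hle
        obtain ⟨Δ, hΔ, haΔ⟩ := t.seg.2.2.2 a (hle h)
        have hpt := t.seg.2.1 Δ hΔ
        exact ⟨mkSeg Δ hpt, hΔ, (iha _).2 haΔ⟩

end CompletenessProof

/-- General strong completeness: if the canonical frame of CK ⊕ Ax lies in
the class 𝓕 and every frame in 𝓕 validates all formulas in Ax, then semantic
entailment on 𝓕 implies derivability in CK ⊕ Ax. -/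
theorem general_strong_completeness (Ax : Set Form) (𝓕 : Set CKFrame)
    (hcan : canonFrame Ax ∈ 𝓕)
    (hval : ∀ F ∈ 𝓕, ∀ φ ∈ Ax, ValidForm F φ)
    (Γ : Set Form) (φ : Form) (h : SemEntails 𝓕 Γ φ) :
    Prv Ax Γ φ := by
  by_contra hnp
  obtain ⟨Δ, hsub, hpt, hφ⟩ := lindenbaum hnp
  have hv := h (canonFrame Ax) hcan (canonVal Ax) (mkSeg Δ hpt)
    (fun ψ hψ => (truth_lemma Ax ψ (mkSeg Δ hpt)).2 (hsub hψ))
  exact hφ ((truth_lemma Ax φ (mkSeg Δ hpt)).1 hv)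
end

section
/- Correspondence for N_◇: a CK-frame (X, e, ≤, R) validates every instance of the axiom N_◇: ◇⊥ → ⊥ if and only if it satisfies (Nd-corr): for all x, if yRe holds for all y with x ≤ y, then x = e. -/
/-- (Nd-corr). -/
def NdCorr (F : CKFrame) : Prop :=
  ∀ x : F.W, (∀ y : F.W, F.le x y → F.R y F.e) → x = F.e

/-- Correspondence for N_◇: a CK-frame validates ◇⊥ → ⊥ iff it satisfies
(Nd-corr). -/
theorem nd_correspondence (F : CKFrame) :
    ValidForm F ((Form.bot.dia).imp Form.bot) ↔ NdCorr F := by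
  constructor
  · intro h x hx
    have V : Val F := ⟨fun _ _ => True, fun _ _ _ _ _ => trivial, fun _ => trivial⟩
    exact h V x x (F.le_refl x) (fun y hy => ⟨F.e, hx y hy, rfl⟩)
  · intro h V x y _ hdia
    exact h y (fun z hz => by obtain ⟨w, hw, rfl⟩ := hdia z hz; exact hw)
end

section
/- Correspondence for I_◇□: a CK-frame (X, e, ≤, R) validates every instance of the axiom I_◇□: (◇φ → □ψ) → □(φ → ψ) if and only if it satisfies (Idb-corr): for all x, y, z with xRy, y ≤ z, and z ≠ e, there exist u, w such that x ≤ u, uRw, w ≤ z, and for every s with u ≤ s, either sRe or there exists t with sRt and z ≤ t. -/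
/-- (Idb-corr). -/
def IdbCorr (F : CKFrame) : Prop :=
  ∀ x y z : F.W, F.R x y → F.le y z → z ≠ F.e →
    ∃ u w : F.W, F.le x u ∧ F.R u w ∧ F.le w z ∧
      ∀ s : F.W, F.le u s → F.R s F.e ∨ ∃ t : F.W, F.R s t ∧ F.le z t

/-! Soundness: given `a R b ≤ c ⊩ φ` with `c ≠ e` below a world forcing `◇φ → □ψ`, the world `u`
supplied by (Idb-corr) forces `◇φ`, since each `s ≥ u` sees either `e` or a world above `c`;
hence `u` forces `□ψ`, so its successor `w ≤ c` forces `ψ`, and so does `c`.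
Completeness: for `x R y ≤ z ≠ e`, the valuation `p := ↑z ∪ {e}`, `q := {v | v ≰ z} ∪ {e}`
makes `◇p → □q` fail above `x`, and the witnesses of that failure are the `u`, `w` of (Idb-corr). -/

theorem Forces.mono (F : CKFrame) (V : Val F) (φ : Form) :
    ∀ {x y : F.W}, F.le x y → Forces F V φ x → Forces F V φ y := by
  induction φ with
  | var p => exact V.mono p
  | bot => rintro x y hxy rfl; exact F.e_max hxy
  | and a b iha ihb => exact fun hxy h => ⟨iha hxy h.1, ihb hxy h.2⟩
  | or a b iha ihb => exact fun hxy h => h.imp (iha hxy) (ihb hxy)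
  | imp a b => exact fun hxy h z hyz => h z (F.le_trans hxy hyz)
  | box a => exact fun hxy h u z hyu => h u z (F.le_trans hxy hyu)
  | dia a => exact fun hxy h u hyu => h u (F.le_trans hxy hyu)

theorem forces_e (F : CKFrame) (V : Val F) (φ : Form) : Forces F V φ F.e := by
  induction φ with
  | var p => exact V.at_e p
  | bot => rfl
  | and a b iha ihb => exact ⟨iha, ihb⟩
  | or a b iha => exact Or.inl iha
  | imp a b _ ihb =>
    intro y hy _
    rwa [F.e_max hy]
  | box a ih =>
    intro y z hy hz
    obtain rfl := F.e_max hy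
    rwa [(F.e_R z).mp hz]
  | dia a ih =>
    intro y hy
    obtain rfl := F.e_max hy
    exact ⟨F.e, (F.e_R F.e).mpr rfl, ih⟩

def Val.idbCountermodel (F : CKFrame) (z : F.W) : Val F where
  V n v := if n = 0 then F.le z v ∨ v = F.e else v = F.e ∨ ¬ F.le v z
  mono p a b hab := by
    split_ifs
    · rintro (hza | rfl)
      exacts [Or.inl (F.le_trans hza hab), Or.inr (F.e_max hab)]
    · rintro (rfl | haz)
      exacts [Or.inl (F.e_max hab), Or.inr fun hbz => haz (F.le_trans hab hbz)]
  at_e p := by split_ifs <;> simp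

theorem valid_idb_of_idbCorr (F : CKFrame) (hF : IdbCorr F) (φ ψ : Form) :
    ValidForm F ((φ.dia.imp ψ.box).imp ((φ.imp ψ).box)) := by
  intro V x y _ hdia a b hya hab c hbc hφc
  by_cases hce : c = F.e
  · subst hce
    exact forces_e F V ψ
  obtain ⟨u, w, hau, huw, hwc, hsucc⟩ := hF a b c hab hbc hce
  have hu_dia : Forces F V φ.dia u := fun s hus => by
    rcases hsucc s hus with hse | ⟨t, hst, hct⟩
    · exact ⟨F.e, hse, forces_e F V φ⟩
    · exact ⟨t, hst, Forces.mono F V φ hct hφc⟩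
  have hu_box : Forces F V ψ.box u := hdia u (F.le_trans hya hau) hu_dia
  exact Forces.mono F V ψ hwc (hu_box u w (F.le_refl u) huw)

theorem idbCorr_of_valid_idb (F : CKFrame)
    (hval : ValidForm F (((Form.var 0).dia.imp (Form.var 1).box).imp
      (((Form.var 0).imp (Form.var 1)).box))) :
    IdbCorr F := by
  intro x y z hxy hyz hz
  let V := Val.idbCountermodel F z
  have hpz : Forces F V (.var 0) z := Or.inl (F.le_refl z)
  have hqz : ¬ Forces F V (.var 1) z := by
    rintro (h | h)
    exacts [hz h, h (F.le_refl z)]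
  have hfail : ¬ Forces F V ((Form.var 0).dia.imp (Form.var 1).box) x := fun h =>
    hqz (hval V x x (F.le_refl x) h x y (F.le_refl x) hxy z hyz hpz)
  simp only [Forces, not_forall] at hfail
  obtain ⟨u₀, hxu₀, hdia, u, w, hu₀u, huw, hwq⟩ := hfail
  have hwz : F.le w z := by
    simp only [V, Val.idbCountermodel, one_ne_zero, if_false, not_or, not_not] at hwq
    exact hwq.2
  refine ⟨u, w, F.le_trans hxu₀ hu₀u, huw, hwz, fun s hus => ?_⟩
  obtain ⟨t, hst, htp⟩ := hdia s (F.le_trans hu₀u hus)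
  rcases htp with hzt | rfl
  exacts [Or.inr ⟨t, hst, hzt⟩, Or.inl hst]

/-- Correspondence for I_◇□: a CK-frame validates every instance of
(◇φ → □ψ) → □(φ → ψ) iff it satisfies (Idb-corr). -/
theorem idb_correspondence (F : CKFrame) :
    (∀ φ ψ : Form, ValidForm F (((φ.dia).imp (ψ.box)).imp ((φ.imp ψ).box))) ↔
      IdbCorr F :=
  ⟨fun hval => idbCorr_of_valid_idb F (hval _ _), valid_idb_of_idbCorr F⟩
end
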